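/- Let ρ be a density matrix on ℂ^(2^L) commuting with the parity operator P_L, with even part ρ_e = Π_e ρ Π_e and odd part ρ_o = Π_o ρ Π_o where Π_e = (I + P_L)/2 and Π_o = (I − P_L)/2. Let r := max(rank ρ_e, rank ρ_o) ≥ 1 and M := ⌈log₂(2r)⌉. Then there exists a unit vector ψ ∈ ℂ^(2^L) ⊗ ℂ^(2^M) with (P_L ⊗ P_M)ψ = ψ whose partial trace over the second factor equals ρ; i.e., ρ admits an even-parity purification with a purifying system of only M qubits. -/

import Mathlib

open Matrix
open scoped Kronecker ComplexOrder

noncomputable section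

/-- Bit strings of length `L`. -/
abbrev BitStr (L : ℕ) := Fin L → Fin 2

/-- The parity operator `P_L = Z^{⊗L}` on `ℂ^(2^L)`: the diagonal matrix with entries
`(−1)^(s₁+⋯+s_L)`. -/
def parityOp (L : ℕ) : Matrix (BitStr L) (BitStr L) ℂ :=
  Matrix.diagonal fun s => (-1 : ℂ) ^ (∑ i, (s i : ℕ))

/-- Partial trace over the second tensor factor. -/
def ptrace2 {α β : Type*} [Fintype β] (M : Matrix (α × β) (α × β) ℂ) : Matrix α α ℂ :=
  Matrix.of fun i i' => ∑ j, M (i, j) (i', j)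

open Finset in
lemma purify_aux {n β ι : Type*} [Fintype n] [DecidableEq n] [Fintype β] [DecidableEq β]
    [Fintype ι] [DecidableEq ι]
    (ρ Pn : Matrix n n ℂ) (d : β → ℂ)
    (w : ι → ℝ) (hw : ∀ k, 0 ≤ w k) (V : ι → n → ℂ) (F : ι → β)
    (hF : Function.Injective F)
    (hρ : ∀ i i', ρ i i' = ∑ k, (w k : ℂ) * V k i * (starRingEnd ℂ) (V k i'))
    (hV : ∀ k, d (F k) • (Pn *ᵥ V k) = V k) :
    ∃ ψ : n × β → ℂ,
      star ψ ⬝ᵥ ψ = ρ.trace ∧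
      (Pn ⊗ₖ Matrix.diagonal d) *ᵥ ψ = ψ ∧
      ptrace2 (Matrix.vecMulVec ψ (star ψ)) = ρ := by
  classical
  set c : ι → ℂ := fun k => (Real.sqrt (w k) : ℂ) with hc
  set ψ : n × β → ℂ := fun p => ∑ k, if p.2 = F k then c k * V k p.1 else 0 with hψ
  have key : ptrace2 (Matrix.vecMulVec ψ (star ψ)) = ρ := by
    ext i i'
    show (∑ j, ψ (i, j) * star (ψ (i', j))) = ρ i i'
    rw [hρ]
    have expand : ∀ j : β, ψ (i, j) * star (ψ (i', j))
        = ∑ k, ∑ k', (if j = F k then c k * V k i else 0) *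
            star (if j = F k' then c k' * V k' i' else 0) := by
      intro j
      rw [hψ]
      simp only [star_sum, Finset.sum_mul_sum]
    calc (∑ j, ψ (i, j) * star (ψ (i', j)))
        = ∑ k, ∑ k', ∑ j, (if j = F k then c k * V k i else 0) *
            star (if j = F k' then c k' * V k' i' else 0) := by
          simp only [expand]
          rw [Finset.sum_comm]
          refine Finset.sum_congr rfl fun k _ => Finset.sum_comm
      _ = ∑ k, (w k : ℂ) * V k i * (starRingEnd ℂ) (V k i') := by
          refine Finset.sum_congr rfl fun k _ => ?_
          have inner : ∀ k' : ι, (∑ j, (if j = F k then c k * V k i else 0) *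
              star (if j = F k' then c k' * V k' i' else 0))
              = if k = k' then (c k * V k i) * star (c k * V k i') else 0 := by
            intro k'
            by_cases h : k = k'
            · subst h
              simp [Finset.sum_ite_eq']
            · have hFF : F k ≠ F k' := fun hh => h (hF hh)
              rw [if_neg h]
              refine Finset.sum_eq_zero fun j _ => ?_
              by_cases hj : j = F k
              · subst hj
                simp [hFF]
              · simp [hj]
          simp only [inner, Finset.sum_ite_eq, Finset.mem_univ, if_true]
          have h1 : star (c k * V k i') = c k * (starRingEnd ℂ) (V k i') := by
            simp [hc, Complex.conj_ofReal]
          have hcc : c k * c k = (w k : ℂ) := by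
            rw [hc, ← Complex.ofReal_mul, Real.mul_self_sqrt (hw k)]
          rw [h1, show (c k * V k i) * (c k * (starRingEnd ℂ) (V k i'))
              = (c k * c k) * V k i * (starRingEnd ℂ) (V k i') from by ring, hcc]
  refine ⟨ψ, ?_, ?_, key⟩
  · -- norm
    have : ρ.trace = ∑ i, ∑ j, ψ (i, j) * star (ψ (i, j)) := by
      rw [← key]
      rfl
    rw [this]
    show (∑ p : n × β, star (ψ p) * ψ p) = _
    rw [Fintype.sum_prod_type]
    exact Finset.sum_congr rfl fun i _ => Finset.sum_congr rfl fun j _ => mul_comm _ _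
  · -- parity
    funext p
    obtain ⟨i, j⟩ := p
    show (∑ q : n × β, (Pn ⊗ₖ Matrix.diagonal d) (i, j) q * ψ q) = ψ (i, j)
    rw [Fintype.sum_prod_type]
    have step1 : ∀ i' : n, (∑ j' : β, (Pn ⊗ₖ Matrix.diagonal d) (i, j) (i', j') * ψ (i', j'))
        = Pn i i' * d j * ψ (i', j) := by
      intro i'
      have : ∀ j' : β, (Pn ⊗ₖ Matrix.diagonal d) (i, j) (i', j') * ψ (i', j')
          = if j' = j then Pn i i' * d j * ψ (i', j) else 0 := by
        intro j'
        by_cases h : j' = j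
        · subst h
          simp [Matrix.kroneckerMap_apply, Matrix.diagonal_apply_eq]
        · simp [Matrix.kroneckerMap_apply, Matrix.diagonal_apply_ne' _ h, h]
      simp only [this, Finset.sum_ite_eq', Finset.mem_univ, if_true]
    simp only [step1]
    rw [hψ]
    simp only [Finset.mul_sum]
    rw [Finset.sum_comm]
    have step2 : ∀ k : ι, (∑ i' : n, Pn i i' * d j * if j = F k then c k * V k i' else 0)
        = if j = F k then c k * V k i else 0 := by
      intro k
      by_cases h : j = F k
      · simp only [if_pos h]
        have : (∑ i' : n, Pn i i' * d j * (c k * V k i')) = d j * c k * (Pn *ᵥ V k) i := by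
          rw [Matrix.mulVec, dotProduct, Finset.mul_sum]
          exact Finset.sum_congr rfl fun i' _ => by ring
        rw [this, h]
        have := congrFun (hV k) i
        simp only [Pi.smul_apply, smul_eq_mul] at this
        rw [mul_assoc, mul_comm (c k) _, ← mul_assoc, this]
        exact mul_comm _ _
      · simp [h]
    exact Finset.sum_congr rfl fun k _ => step2 k


lemma flip_parity {M : ℕ} (hM : 0 < M) (t : BitStr M) :
    Even (∑ i, ((Function.update t ⟨0, hM⟩ (t ⟨0, hM⟩ + 1)) i : ℕ)) ↔
      ¬ Even (∑ i, (t i : ℕ)) := by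
  set i0 : Fin M := ⟨0, hM⟩
  rw [Finset.sum_eq_sum_sdiff_singleton_add (Finset.mem_univ i0)
    (fun i => ((Function.update t i0 (t i0 + 1) i : Fin 2) : ℕ)),
    Finset.sum_eq_sum_sdiff_singleton_add (Finset.mem_univ i0) (fun i => ((t i : Fin 2) : ℕ))]
  rw [show (∑ i ∈ Finset.univ \ {i0}, ((Function.update t i0 (t i0 + 1) i : Fin 2) : ℕ))
      = ∑ i ∈ Finset.univ \ {i0}, ((t i : Fin 2) : ℕ) from
    Finset.sum_congr rfl fun i hi => by
      have hne : i ≠ i0 := by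
        have := (Finset.mem_sdiff.mp hi).2
        simpa using this
      rw [Function.update_of_ne hne]]
  rw [Function.update_self]
  have h01 : ∀ x : Fin 2, x = 0 ∨ x = 1 := by decide
  rcases h01 (t i0) with h | h <;> rw [h] <;> simp [Nat.even_iff] <;> omega

lemma flip_flip_bits {M : ℕ} (hM : 0 < M) (t : BitStr M) :
    (fun s : BitStr M => Function.update s ⟨0, hM⟩ (s ⟨0, hM⟩ + 1))
      ((fun s : BitStr M => Function.update s ⟨0, hM⟩ (s ⟨0, hM⟩ + 1)) t) = t := by
  have h11 : ∀ x : Fin 2, x + 1 + 1 = x := by decide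
  funext i
  by_cases h : i = (⟨0, hM⟩ : Fin M)
  · subst h; simp [Function.update_self, h11]
  · simp [Function.update_of_ne h]

lemma parity_card_eq {M : ℕ} (hM : 0 < M) :
    Fintype.card {t : BitStr M // ¬ Even (∑ i, (t i : ℕ))}
      = Fintype.card {t : BitStr M // Even (∑ i, (t i : ℕ))} := by
  apply Fintype.card_congr
  refine ⟨fun t => ⟨Function.update t.1 ⟨0,hM⟩ (t.1 ⟨0,hM⟩ + 1), (flip_parity hM t.1).mpr t.2⟩,
          fun t => ⟨Function.update t.1 ⟨0,hM⟩ (t.1 ⟨0,hM⟩ + 1),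
            fun h => (flip_parity hM t.1).mp h t.2⟩, ?_, ?_⟩
  · intro t; exact Subtype.ext (flip_flip_bits hM t.1)
  · intro t; exact Subtype.ext (flip_flip_bits hM t.1)

lemma counting {M r : ℕ} (hM : 0 < M) (h : 2 * r ≤ 2 ^ M) :
    r ≤ Fintype.card {t : BitStr M // Even (∑ i, (t i : ℕ))} ∧
    r ≤ Fintype.card {t : BitStr M // ¬ Even (∑ i, (t i : ℕ))} := by
  have htot : Fintype.card (BitStr M) = 2 ^ M := by
    simp [Fintype.card_fun]
  have hc := Fintype.card_subtype_compl (fun t : BitStr M => Even (∑ i, (t i : ℕ)))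
  have hle := Fintype.card_subtype_le (fun t : BitStr M => Even (∑ i, (t i : ℕ)))
  have heq := parity_card_eq hM
  rw [htot] at hc
  rw [heq] at hc ⊢
  generalize hA : Fintype.card {t : BitStr M // Even (∑ i, (t i : ℕ))} = a at hc ⊢
  generalize hN : 2 ^ M = N at hc h
  clear hle heq htot hA hN hM
  constructor <;> omega

lemma entry_spectral {n : Type*} [Fintype n] [DecidableEq n] {A : Matrix n n ℂ}
    (hA : A.IsHermitian) (i i' : n) :
    A i i' = ∑ s, (hA.eigenvalues s : ℂ) * hA.eigenvectorBasis s i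
      * (starRingEnd ℂ) (hA.eigenvectorBasis s i') := by
  conv_lhs => rw [hA.spectral_theorem, Unitary.conjStarAlgAut_apply]
  simp only [Matrix.mul_apply, Matrix.diagonal_apply, Function.comp_apply, ite_mul, zero_mul,
    mul_ite, mul_zero, Finset.sum_ite_eq, Finset.sum_ite_eq', Finset.mem_univ, if_true,
    Matrix.star_apply, Matrix.IsHermitian.eigenvectorUnitary_apply]
  refine Finset.sum_congr rfl fun s _ => ?_
  show hA.eigenvectorBasis s i * (hA.eigenvalues s : ℂ)
      * (starRingEnd ℂ) (hA.eigenvectorBasis s i') = _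
  ring

lemma trace_eq_sum_eigs {n : Type*} [Fintype n] [DecidableEq n] {A : Matrix n n ℂ}
    (hA : A.IsHermitian) : A.trace = ∑ s, (hA.eigenvalues s : ℂ) := by
  conv_lhs => rw [hA.spectral_theorem, Unitary.conjStarAlgAut_apply]
  rw [Matrix.trace_mul_cycle, Unitary.coe_star_mul_self]
  simp [Matrix.trace_diagonal]

lemma eig_parity {n : Type*} [Fintype n] [DecidableEq n] {A P : Matrix n n ℂ} {ε : ℂ}
    (hA : A.IsHermitian) (hPA : P * A = ε • A) (s : n) (hs : hA.eigenvalues s ≠ 0) :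
    P *ᵥ ⇑(hA.eigenvectorBasis s) = ε • ⇑(hA.eigenvectorBasis s) := by
  have h1 := hA.mulVec_eigenvectorBasis s
  have h2 : P *ᵥ (A *ᵥ ⇑(hA.eigenvectorBasis s)) = ε • (A *ᵥ ⇑(hA.eigenvectorBasis s)) := by
    rw [Matrix.mulVec_mulVec, hPA, Matrix.smul_mulVec]
  rw [h1] at h2
  rw [Matrix.mulVec_smul] at h2
  have h3 : hA.eigenvalues s • (P *ᵥ ⇑(hA.eigenvectorBasis s))
      = hA.eigenvalues s • (ε • ⇑(hA.eigenvectorBasis s)) := by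
    rw [h2, smul_comm]
  exact smul_right_injective _ hs h3

/-- A parity-symmetric density matrix `ρ` with even/odd parts of ranks at most `r` admits an
even-parity purification with a purifying system of only `M = ⌈log₂(2r)⌉` qubits. -/
theorem minimal_even_parity_purification (L : ℕ)
    (ρ : Matrix (BitStr L) (BitStr L) ℂ) (hρ : ρ.PosSemidef) (htr : ρ.trace = 1)
    (hpar : ρ * parityOp L = parityOp L * ρ)
    (r M : ℕ)
    (hr : r = max ((((1 / 2 : ℂ) • (1 + parityOp L)) * ρ *
                    ((1 / 2 : ℂ) • (1 + parityOp L))).rank)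
               ((((1 / 2 : ℂ) • (1 - parityOp L)) * ρ *
                    ((1 / 2 : ℂ) • (1 - parityOp L))).rank))
    (hr1 : 1 ≤ r)
    (hM : M = Nat.clog 2 (2 * r)) :
    ∃ ψ : BitStr L × BitStr M → ℂ,
      star ψ ⬝ᵥ ψ = 1 ∧
      (parityOp L ⊗ₖ parityOp M).mulVec ψ = ψ ∧
      ptrace2 (Matrix.vecMulVec ψ (star ψ)) = ρ := by
  classical
  set P := parityOp L with hPdef
  have hP2 : P * P = 1 := by
    simp only [hPdef, parityOp, Matrix.diagonal_mul_diagonal, ← mul_pow, neg_mul_neg, one_mul,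
      one_pow]
    exact Matrix.diagonal_one
  set Qe : Matrix (BitStr L) (BitStr L) ℂ := (1 / 2 : ℂ) • (1 + P) with hQedef
  set Qo : Matrix (BitStr L) (BitStr L) ℂ := (1 / 2 : ℂ) • (1 - P) with hQodef
  set ρe := Qe * ρ * Qe with hρedef
  set ρo := Qo * ρ * Qo with hρodef
  have hPH : Pᴴ = P := by
    simp only [hPdef, parityOp, Matrix.diagonal_conjTranspose]
    funext s
    simp [Pi.star_def, star_pow]
  have hQeρ : Qe * ρ = ρ * Qe := by
    rw [hQedef, Matrix.smul_mul, Matrix.mul_smul]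
    congr 1
    rw [add_mul, mul_add, one_mul, mul_one, hpar]
  have hQoρ : Qo * ρ = ρ * Qo := by
    rw [hQodef, Matrix.smul_mul, Matrix.mul_smul]
    congr 1
    rw [sub_mul, mul_sub, one_mul, mul_one, hpar]
  have hQeQo : Qe * Qo = 0 := by
    rw [hQedef, hQodef, Matrix.smul_mul, Matrix.mul_smul, smul_smul]
    have h0 : (1 + P) * (1 - P) = 0 := by
      rw [mul_sub, mul_one, add_mul, one_mul, hP2]
      abel
    rw [h0, smul_zero]
  have hQoQe : Qo * Qe = 0 := by
    rw [hQedef, hQodef, Matrix.smul_mul, Matrix.mul_smul, smul_smul]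
    have h0 : (1 - P) * (1 + P) = 0 := by
      rw [mul_add, mul_one, sub_mul, one_mul, hP2]
      abel
    rw [h0, smul_zero]
  have hQe2 : Qe * Qe = Qe := by
    rw [hQedef, Matrix.smul_mul, Matrix.mul_smul, smul_smul]
    have h0 : (1 + P) * (1 + P) = (2 : ℂ) • (1 + P) := by
      rw [mul_add, mul_one, add_mul, one_mul, hP2, two_smul]
      abel
    rw [h0, smul_smul]
    norm_num
  have hQo2 : Qo * Qo = Qo := by
    rw [hQodef, Matrix.smul_mul, Matrix.mul_smul, smul_smul]
    have h0 : (1 - P) * (1 - P) = (2 : ℂ) • (1 - P) := by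
      rw [mul_sub, mul_one, sub_mul, one_mul, hP2, two_smul]
      abel
    rw [h0, smul_smul]
    norm_num
  have hQsum : Qe + Qo = 1 := by
    rw [hQedef, hQodef, ← smul_add]
    have : (1 + P) + (1 - P) = (2 : ℂ) • (1 : Matrix (BitStr L) (BitStr L) ℂ) := by
      rw [two_smul]; abel
    rw [this, smul_smul]
    norm_num
  have hsplit : ρ = ρe + ρo := by
    have c1 : Qe * ρ * Qo = 0 := by rw [hQeρ, Matrix.mul_assoc, hQeQo, Matrix.mul_zero]
    have c2 : Qo * ρ * Qe = 0 := by rw [hQoρ, Matrix.mul_assoc, hQoQe, Matrix.mul_zero]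
    calc ρ = (Qe + Qo) * ρ * (Qe + Qo) := by rw [hQsum, one_mul, mul_one]
      _ = Qe * ρ * Qe + Qe * ρ * Qo + (Qo * ρ * Qe + Qo * ρ * Qo) := by
          rw [add_mul, add_mul, mul_add, mul_add]
      _ = ρe + ρo := by rw [c1, c2, hρedef, hρodef]; abel
  have hPQe : P * Qe = Qe := by
    rw [hQedef, Matrix.mul_smul, mul_add, mul_one, hP2]
    rw [add_comm]
  have hPQo : P * Qo = -Qo := by
    rw [hQodef, Matrix.mul_smul, mul_sub, mul_one, hP2, ← smul_neg]
    congr 1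
    abel
  have hPρe : P * ρe = (1 : ℂ) • ρe := by
    rw [one_smul, hρedef, ← Matrix.mul_assoc, ← Matrix.mul_assoc, hPQe]
  have hPρo : P * ρo = (-1 : ℂ) • ρo := by
    rw [hρodef, ← Matrix.mul_assoc, ← Matrix.mul_assoc, hPQo, neg_smul, one_smul,
      Matrix.neg_mul, Matrix.neg_mul]
  have hρe_psd : ρe.PosSemidef := by
    have := hρ.mul_mul_conjTranspose_same Qe
    have hQeH : Qeᴴ = Qe := by
      rw [hQedef, Matrix.conjTranspose_smul, Matrix.conjTranspose_add, Matrix.conjTranspose_one,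
        hPH]
      norm_num
    rwa [hQeH] at this
  have hρo_psd : ρo.PosSemidef := by
    have := hρ.mul_mul_conjTranspose_same Qo
    have hQoH : Qoᴴ = Qo := by
      rw [hQodef, Matrix.conjTranspose_smul, Matrix.conjTranspose_sub, Matrix.conjTranspose_one,
        hPH]
      norm_num
    rwa [hQoH] at this
  have he : ρe.IsHermitian := hρe_psd.1
  have ho : ρo.IsHermitian := hρo_psd.1
  -- trace identity
  have htrsum : ρe.trace + ρo.trace = 1 := by
    have t1 : ρe.trace = (Qe * ρ).trace := by
      rw [hρedef, Matrix.trace_mul_cycle, hQe2]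
    have t2 : ρo.trace = (Qo * ρ).trace := by
      rw [hρodef, Matrix.trace_mul_cycle, hQo2]
    rw [t1, t2, ← Matrix.trace_add, ← Matrix.add_mul, hQsum, Matrix.one_mul, htr]
  -- size bounds
  have h2M : 2 * r ≤ 2 ^ M := by
    rw [hM]
    exact Nat.le_pow_clog (by norm_num) _
  have hM0 : 0 < M := by
    rcases Nat.eq_zero_or_pos M with h | h
    · rw [h] at h2M; simp at h2M; omega
    · exact h
  obtain ⟨hcE, hcO⟩ := counting hM0 h2M
  have hranke : Fintype.card {s : BitStr L // he.eigenvalues s ≠ 0} ≤ r := by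
    rw [← he.rank_eq_card_non_zero_eigs]
    rw [hr]
    exact le_max_left _ _
  have hranko : Fintype.card {s : BitStr L // ho.eigenvalues s ≠ 0} ≤ r := by
    rw [← ho.rank_eq_card_non_zero_eigs]
    rw [hr]
    exact le_max_right _ _
  obtain ⟨fe⟩ := Function.Embedding.nonempty_of_card_le (le_trans hranke hcE)
  obtain ⟨fo⟩ := Function.Embedding.nonempty_of_card_le (le_trans hranko hcO)
  -- data for purify_aux
  set ι := {s : BitStr L // he.eigenvalues s ≠ 0} ⊕ {s : BitStr L // ho.eigenvalues s ≠ 0} with hι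
  set w : ι → ℝ := Sum.elim (fun s => he.eigenvalues s.1) (fun s => ho.eigenvalues s.1) with hw'
  set V : ι → BitStr L → ℂ := Sum.elim (fun s => ⇑(he.eigenvectorBasis s.1))
    (fun s => ⇑(ho.eigenvectorBasis s.1)) with hV'
  set F : ι → BitStr M := Sum.elim (fun s => (fe s).1) (fun s => (fo s).1) with hF'
  set d : BitStr M → ℂ := fun t => (-1 : ℂ) ^ (∑ i, (t i : ℕ)) with hd'
  have hw : ∀ k, 0 ≤ w k := by
    rintro (s | s)
    · exact hρe_psd.eigenvalues_nonneg s.1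
    · exact hρo_psd.eigenvalues_nonneg s.1
  have hF : Function.Injective F := by
    rintro (a | a) (b | b) hab <;>
      simp only [hF', Sum.elim_inl, Sum.elim_inr] at hab
    · exact congrArg Sum.inl (fe.injective (Subtype.ext hab))
    · exact absurd (hab ▸ (fe a).2) (fo b).2
    · exact absurd (hab.symm ▸ (fe b).2) (fo a).2
    · exact congrArg Sum.inr (fo.injective (Subtype.ext hab))
  have hrec : ∀ i i', ρ i i' = ∑ k, (w k : ℂ) * V k i * (starRingEnd ℂ) (V k i') := by
    intro i i'
    have restrict : ∀ (A : Matrix (BitStr L) (BitStr L) ℂ) (hA : A.IsHermitian),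
        A i i' = ∑ s : {s : BitStr L // hA.eigenvalues s ≠ 0},
          (hA.eigenvalues s.1 : ℂ) * hA.eigenvectorBasis s.1 i
            * (starRingEnd ℂ) (hA.eigenvectorBasis s.1 i') := by
      intro A hA
      rw [entry_spectral hA]
      rw [← Finset.sum_filter_of_ne (p := fun s => hA.eigenvalues s ≠ 0)
        (fun s _ hf hz => hf (by rw [hz]; simp))]
      exact Finset.sum_subtype _ (by simp) _
    rw [hsplit, Matrix.add_apply, restrict ρe he, restrict ρo ho, Fintype.sum_sum_type]
    rfl
  have hVpar : ∀ k, d (F k) • (P *ᵥ V k) = V k := by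
    rintro (s | s)
    · have heven : Even (∑ i, (((fe s).1 : BitStr M) i : ℕ)) := (fe s).2
      have hd1 : d (F (Sum.inl s)) = 1 := heven.neg_one_pow
      rw [hd1, one_smul]
      show P *ᵥ ⇑(he.eigenvectorBasis s.1) = ⇑(he.eigenvectorBasis s.1)
      rw [eig_parity he hPρe s.1 s.2, one_smul]
    · have hodd : Odd (∑ i, (((fo s).1 : BitStr M) i : ℕ)) :=
        Nat.not_even_iff_odd.mp (fo s).2
      have hd1 : d (F (Sum.inr s)) = -1 := hodd.neg_one_pow
      rw [hd1]
      show (-1 : ℂ) • (P *ᵥ ⇑(ho.eigenvectorBasis s.1)) = ⇑(ho.eigenvectorBasis s.1)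
      rw [eig_parity ho hPρo s.1 s.2, smul_smul]
      norm_num
  obtain ⟨ψ, h1, h2, h3⟩ := purify_aux ρ P d w hw V F hF hrec hVpar
  refine ⟨ψ, by rw [h1, htr], ?_, h3⟩
  have : parityOp M = Matrix.diagonal d := rfl
  rw [this]
  exact h2
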